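/- arXiv:1602.08349 — 9 statements merged into one kernel-verified Lean document; each statement's English description precedes it below -/
import Mathlib

section
/- Let L be a lattice in which the following three inclusions hold for all elements: (Unjp): x ∧ (y ∨ z) ≤ (x ∧ ((x ∧ y) ∨ z)) ∨ (x ∧ (y ∨ (x ∧ z))); (RMod): x ∧ ((x ∧ y) ∨ (z₀ ∧ (z₁ ∨ z₂))) ≤ (x ∧ ((x ∧ y) ∨ (z₀ ∧ z₁) ∨ (z₀ ∧ z₂))) ∨ (x ∧ z₀ ∧ (z₁ ∨ z₂)); (VarRL1): x ∧ ((y ∧ z) ∨ (y ∧ x) ∨ (z ∧ x)) ≤ (x ∧ y) ∨ (x ∧ z). Then L also satisfies (RL1): x ∧ ((y ∧ (z ∨ x)) ∨ (z ∧ (y ∨ x))) ≤ (x ∧ y) ∨ (x ∧ z) for all x, y, z. -/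
theorem stmt_9 {L : Type*} [Lattice L]
    (hUnjp : ∀ x y z : L, x ⊓ (y ⊔ z) ≤ (x ⊓ ((x ⊓ y) ⊔ z)) ⊔ (x ⊓ (y ⊔ (x ⊓ z))))
    (hRMod : ∀ x y z₀ z₁ z₂ : L, x ⊓ ((x ⊓ y) ⊔ (z₀ ⊓ (z₁ ⊔ z₂))) ≤
      (x ⊓ ((x ⊓ y) ⊔ (z₀ ⊓ z₁) ⊔ (z₀ ⊓ z₂))) ⊔ (x ⊓ z₀ ⊓ (z₁ ⊔ z₂)))
    (hVarRL1 : ∀ x y z : L, x ⊓ ((y ⊓ z) ⊔ (y ⊓ x) ⊔ (z ⊓ x)) ≤ (x ⊓ y) ⊔ (x ⊓ z)) :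
    ∀ x y z : L, x ⊓ ((y ⊓ (z ⊔ x)) ⊔ (z ⊓ (y ⊔ x))) ≤ (x ⊓ y) ⊔ (x ⊓ z) := by
  intro x y z
  have ea : x ⊓ (y ⊓ (z ⊔ x)) = x ⊓ y := by
    rw [← inf_assoc]
    exact inf_eq_left.mpr (le_trans inf_le_left le_sup_right)
  have eb : x ⊓ (z ⊓ (y ⊔ x)) = x ⊓ z := by
    rw [← inf_assoc]
    exact inf_eq_left.mpr (le_trans inf_le_left le_sup_right)
  have h1 := hUnjp x (y ⊓ (z ⊔ x)) (z ⊓ (y ⊔ x))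
  rw [ea, eb] at h1
  refine le_trans h1 (sup_le ?_ ?_)
  · -- x ⊓ ((x ⊓ y) ⊔ (z ⊓ (y ⊔ x))) ≤ (x ⊓ y) ⊔ (x ⊓ z)
    refine le_trans (hRMod x y z y x) (sup_le ?_ ?_)
    · have e : (x ⊓ y) ⊔ (z ⊓ y) ⊔ (z ⊓ x) = (y ⊓ z) ⊔ (y ⊓ x) ⊔ (z ⊓ x) := by
        rw [inf_comm x y, inf_comm z y, sup_comm (y ⊓ x) (y ⊓ z)]
      rw [e]
      exact hVarRL1 x y z
    · exact le_sup_of_le_right inf_le_left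
  · -- x ⊓ ((y ⊓ (z ⊔ x)) ⊔ (x ⊓ z)) ≤ (x ⊓ y) ⊔ (x ⊓ z)
    rw [sup_comm (y ⊓ (z ⊔ x)) (x ⊓ z)]
    refine le_trans (hRMod x z y z x) (sup_le ?_ ?_)
    · have e : (x ⊓ z) ⊔ (y ⊓ z) ⊔ (y ⊓ x) = (y ⊓ z) ⊔ (y ⊓ x) ⊔ (z ⊓ x) := by
        rw [inf_comm x z]
        ac_rfl
      rw [e]
      exact hVarRL1 x y z
    · exact le_sup_of_le_left inf_le_left
end

section
/- Let L be a lattice satisfying (RMod): x ∧ ((x ∧ y) ∨ (z₀ ∧ (z₁ ∨ z₂))) ≤ (x ∧ ((x ∧ y) ∨ (z₀ ∧ z₁) ∨ (z₀ ∧ z₂))) ∨ (x ∧ z₀ ∧ (z₁ ∨ z₂)) for all x, y, z₀, z₁, z₂. Then for all x, y, z in L: x ∧ ((y ∧ x) ∨ (z ∧ (y ∨ x))) = x ∧ ((y ∧ z) ∨ (y ∧ x) ∨ (z ∧ x)). -/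
theorem stmt_10 {L : Type*} [Lattice L]
    (hRMod : ∀ x y z₀ z₁ z₂ : L, x ⊓ ((x ⊓ y) ⊔ (z₀ ⊓ (z₁ ⊔ z₂))) ≤
      (x ⊓ ((x ⊓ y) ⊔ (z₀ ⊓ z₁) ⊔ (z₀ ⊓ z₂))) ⊔ (x ⊓ z₀ ⊓ (z₁ ⊔ z₂))) :
    ∀ x y z : L, x ⊓ ((y ⊓ x) ⊔ (z ⊓ (y ⊔ x))) = x ⊓ ((y ⊓ z) ⊔ (y ⊓ x) ⊔ (z ⊓ x)) := by
  intro x y z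
  apply le_antisymm
  · have h := hRMod x y z y x
    rw [inf_comm x y] at h
    refine h.trans (sup_le ?_ ?_)
    · refine le_inf inf_le_left ?_
      refine le_trans inf_le_right (sup_le (sup_le ?_ ?_) ?_)
      · exact le_sup_of_le_left (le_sup_of_le_right le_rfl)
      · exact le_sup_of_le_left (le_sup_of_le_left (by rw [inf_comm]))
      · exact le_sup_of_le_right le_rfl
    · have : x ⊓ z ⊓ (y ⊔ x) ≤ x ⊓ (z ⊓ x) := by
        refine le_inf (le_trans inf_le_left inf_le_left) ?_
        exact le_inf (le_trans inf_le_left inf_le_right)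
          (le_trans inf_le_left inf_le_left)
      exact this.trans (inf_le_inf_left _ (le_sup_of_le_right le_rfl))
  · refine le_inf inf_le_left ?_
    refine le_trans inf_le_right (sup_le (sup_le ?_ ?_) ?_)
    · exact le_sup_of_le_right (le_inf inf_le_right (le_sup_of_le_left inf_le_left))
    · exact le_sup_of_le_left le_rfl
    · exact le_sup_of_le_right (le_inf inf_le_left (le_sup_of_le_right inf_le_right))
end

section
/- Let L be a lattice satisfying the inclusion (Sym): x ∧ (y ∨ (z₀ ∧ (z₁ ∨ z₂))) ≤ (x ∧ (y ∨ (z₀ ∧ z₁) ∨ (z₀ ∧ z₂))) ∨ (x ∧ (y ∨ ((z₀ ∧ (z₁ ∨ z₂)) ∧ (y ∨ x)))) for all x, y, z₀, z₁, z₂. Then L satisfies (RMod): x ∧ ((x ∧ y) ∨ (z₀ ∧ (z₁ ∨ z₂))) ≤ (x ∧ ((x ∧ y) ∨ (z₀ ∧ z₁) ∨ (z₀ ∧ z₂))) ∨ (x ∧ z₀ ∧ (z₁ ∨ z₂)) for all x, y, z₀, z₁, z₂. -/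
theorem stmt_11 {L : Type*} [Lattice L]
    (hSym : ∀ x y z₀ z₁ z₂ : L, x ⊓ (y ⊔ (z₀ ⊓ (z₁ ⊔ z₂))) ≤
      (x ⊓ (y ⊔ (z₀ ⊓ z₁) ⊔ (z₀ ⊓ z₂))) ⊔ (x ⊓ (y ⊔ ((z₀ ⊓ (z₁ ⊔ z₂)) ⊓ (y ⊔ x))))) :
    ∀ x y z₀ z₁ z₂ : L, x ⊓ ((x ⊓ y) ⊔ (z₀ ⊓ (z₁ ⊔ z₂))) ≤
      (x ⊓ ((x ⊓ y) ⊔ (z₀ ⊓ z₁) ⊔ (z₀ ⊓ z₂))) ⊔ (x ⊓ z₀ ⊓ (z₁ ⊔ z₂)) := by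
  intro x y z₀ z₁ z₂
  have h := hSym x (x ⊓ y) z₀ z₁ z₂
  refine h.trans (sup_le le_sup_left ?_)
  have hx : (x ⊓ y) ⊔ x = x := sup_eq_right.2 inf_le_left
  rw [hx]
  have h2 : x ⊓ ((x ⊓ y) ⊔ z₀ ⊓ (z₁ ⊔ z₂) ⊓ x) = (x ⊓ y) ⊔ z₀ ⊓ (z₁ ⊔ z₂) ⊓ x :=
    inf_eq_right.2 (sup_le inf_le_left inf_le_right)
  rw [h2]
  refine sup_le (le_sup_of_le_left (le_inf inf_le_left (le_sup_of_le_left le_sup_left))) ?_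
  refine le_sup_of_le_right ?_
  exact le_inf (le_inf inf_le_right (inf_le_left.trans inf_le_left)) (inf_le_left.trans inf_le_right)
end

section
/- Let L be a finite lattice satisfying (VarRL1): x ∧ ((y ∧ z) ∨ (y ∧ x) ∨ (z ∧ x)) ≤ (x ∧ y) ∨ (x ∧ z) for all x, y, z. Then for every join-irreducible element k₀ and every minimal join-cover C of k₀, there exists at most one element c ∈ C with c ≤ k₀. That is, if C = {k₁} ∪ {k₂} ∪ D with k₁ ≠ k₂ and k₁, k₂ ≤ k₀, then C is not a minimal join-cover of k₀. -/
variable {L : Type*} [Lattice L] [OrderBot L]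

def JoinIrred (j : L) : Prop := j ≠ ⊥ ∧ ∀ a b : L, j = a ⊔ b → j = a ∨ j = b

def Refines (X Y : Finset L) : Prop := ∀ x ∈ X, ∃ y ∈ Y, x ≤ y

def MinJoinCover (j : L) (C : Finset L) : Prop :=
  (∀ c ∈ C, JoinIrred c) ∧ IsAntichain (· ≤ ·) (C : Set L) ∧ j ≤ C.sup id ∧
    ∀ D : Finset L, (∀ d ∈ D, JoinIrred d) → j ≤ D.sup id → Refines D C → C ⊆ D

theorem stmt_12 [Fintype L]
    (hVarRL1 : ∀ x y z : L, x ⊓ ((y ⊓ z) ⊔ (y ⊓ x) ⊔ (z ⊓ x)) ≤ (x ⊓ y) ⊔ (x ⊓ z))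
    (k₀ : L) (hk₀ : JoinIrred k₀) (C : Finset L) (hC : MinJoinCover k₀ C) :
    ∀ k₁ ∈ C, ∀ k₂ ∈ C, k₁ ≤ k₀ → k₂ ≤ k₀ → k₁ = k₂ := by
  intro k₁ hk₁ k₂ hk₂ h1 h2
  classical
  by_contra hne
  obtain ⟨hJI, hAC, hcov, hmin⟩ := hC
  set s : L := (C \ {k₁, k₂}).sup id with hs
  have hsub : C \ {k₁, k₂} ⊆ C := Finset.sdiff_subset
  have hCsup : C.sup id ≤ k₁ ⊔ k₂ ⊔ s := by
    apply Finset.sup_le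
    intro c hc
    by_cases hc1 : c = k₁
    · subst hc1; exact le_sup_of_le_left le_sup_left
    by_cases hc2 : c = k₂
    · subst hc2; exact le_sup_of_le_left le_sup_right
    · have : c ∈ C \ {k₁, k₂} := by
        simp [Finset.mem_sdiff, hc, hc1, hc2]
      exact le_sup_of_le_right (Finset.le_sup (f := id) this)
  have key : k₀ ≤ (k₀ ⊓ (k₁ ⊔ s)) ⊔ (k₀ ⊓ (k₂ ⊔ s)) := by
    have h3 : k₀ ≤ k₀ ⊓ (((k₁ ⊔ s) ⊓ (k₂ ⊔ s)) ⊔ ((k₁ ⊔ s) ⊓ k₀) ⊔ ((k₂ ⊔ s) ⊓ k₀)) := by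
      refine le_inf le_rfl ?_
      calc k₀ ≤ k₁ ⊔ k₂ ⊔ s := le_trans hcov hCsup
        _ ≤ _ := by
          apply sup_le (sup_le _ _) _
          · exact le_sup_of_le_left (le_sup_of_le_right (le_inf le_sup_left h1))
          · exact le_sup_of_le_right (le_inf le_sup_left h2)
          · exact le_sup_of_le_left (le_sup_of_le_left (le_inf le_sup_right le_sup_right))
    exact le_trans h3 (hVarRL1 k₀ (k₁ ⊔ s) (k₂ ⊔ s))
  have keq : k₀ = (k₀ ⊓ (k₁ ⊔ s)) ⊔ (k₀ ⊓ (k₂ ⊔ s)) :=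
    le_antisymm key (sup_le inf_le_left inf_le_left)
  have hcase := hk₀.2 _ _ keq
  have final : ∀ a b : L, a ∈ C → b ∈ C → a ≠ b → (b = k₁ ∨ b = k₂) → k₀ ≤ a ⊔ s → False := by
    intro a b ha hb hab hbmem hle
    have hDle : k₀ ≤ (C.erase b).sup id := by
      refine le_trans hle (sup_le (Finset.le_sup (f := id) (Finset.mem_erase.2 ⟨hab, ha⟩)) ?_)
      apply Finset.sup_le
      intro c hc
      refine Finset.le_sup (f := id) (Finset.mem_erase.2 ⟨?_, hsub hc⟩)
      intro h; subst h
      simp [Finset.mem_sdiff] at hc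
      rcases hbmem with h | h <;> subst h <;> tauto
    have hCsubD := hmin (C.erase b) (fun d hd => hJI d (Finset.mem_of_mem_erase hd))
      hDle (fun x hx => ⟨x, Finset.mem_of_mem_erase hx, le_rfl⟩)
    exact (Finset.notMem_erase b C) (hCsubD hb)
  rcases hcase with h | h
  · exact final k₁ k₂ hk₁ hk₂ hne (Or.inr rfl) (h ▸ inf_le_right)
  · exact final k₂ k₁ hk₂ hk₁ (Ne.symm hne) (Or.inl rfl) (h ▸ inf_le_right)
end

section
/- Let L be a finite lattice satisfying (Sym): x ∧ (y ∨ (z₀ ∧ (z₁ ∨ z₂))) ≤ (x ∧ (y ∨ (z₀ ∧ z₁) ∨ (z₀ ∧ z₂))) ∨ (x ∧ (y ∨ ((z₀ ∧ (z₁ ∨ z₂)) ∧ (y ∨ x)))) for all x, y, z₀, z₁, z₂. Suppose k₀ ⋘m C ∪ {k₁} is a minimal join-cover of the join-irreducible k₀, where k₁ is join-irreducible but not join-prime and k₁ ∉ C. Then k₁ ≤ (⋁C) ∨ k₀. -/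
variable {L : Type*} [Lattice L] [OrderBot L] [DecidableEq L]

def JoinPrime (j : L) : Prop := ∀ a b : L, j ≤ a ⊔ b → j ≤ a ∨ j ≤ b

lemma exists_irred_decomp [Fintype L] (x : L) :
    ∃ S : Finset L, (∀ s ∈ S, JoinIrred s ∧ s ≤ x) ∧ S.sup id = x := by
  induction x using WellFoundedLT.induction with
  | _ x ih =>
    by_cases hbot : x = ⊥
    · exact ⟨∅, by simp, by simp [hbot]⟩
    by_cases hirr : JoinIrred x
    · exact ⟨{x}, by simp [hirr], by simp⟩
    · rw [JoinIrred] at hirr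
      push_neg at hirr
      obtain ⟨a, b, hab, ha, hb⟩ := hirr hbot
      have halt : a < x := lt_of_le_of_ne (hab ▸ le_sup_left) (fun h => ha h.symm)
      have hblt : b < x := lt_of_le_of_ne (hab ▸ le_sup_right) (fun h => hb h.symm)
      obtain ⟨Sa, hSa, hSa'⟩ := ih a halt
      obtain ⟨Sb, hSb, hSb'⟩ := ih b hblt
      refine ⟨Sa ∪ Sb, ?_, by rw [Finset.sup_union, hSa', hSb', hab]⟩
      intro s hs
      rcases Finset.mem_union.1 hs with h | h
      · exact ⟨(hSa s h).1, (hSa s h).2.trans halt.le⟩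
      · exact ⟨(hSb s h).1, (hSb s h).2.trans hblt.le⟩

lemma key_cover [Fintype L] {k₀ k₁ : L} {C : Finset L} (hk₁C : k₁ ∉ C)
    (hmjc : MinJoinCover k₀ (insert k₁ C)) (m : L) (hm : m ≤ k₁)
    (hcov : k₀ ≤ C.sup id ⊔ m) : k₁ ≤ m := by
  obtain ⟨hirrC, -, -, hmin⟩ := hmjc
  obtain ⟨S, hS, hSsup⟩ := exists_irred_decomp m
  have hsub : insert k₁ C ⊆ C ∪ S := by
    refine hmin (C ∪ S) ?_ ?_ ?_
    · intro d hd
      rcases Finset.mem_union.1 hd with h | h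
      · exact hirrC d (Finset.mem_insert_of_mem h)
      · exact (hS d h).1
    · rwa [Finset.sup_union, hSsup]
    · intro d hd
      rcases Finset.mem_union.1 hd with h | h
      · exact ⟨d, Finset.mem_insert_of_mem h, le_rfl⟩
      · exact ⟨k₁, Finset.mem_insert_self _ _, (hS d h).2.trans hm⟩
  have hk₁mem : k₁ ∈ C ∪ S := hsub (Finset.mem_insert_self k₁ C)
  rcases Finset.mem_union.1 hk₁mem with h | h
  · exact absurd h hk₁C
  · exact hSsup ▸ Finset.le_sup (f := id) h

theorem stmt_13 [Fintype L]
    (hSym : ∀ x y z₀ z₁ z₂ : L, x ⊓ (y ⊔ (z₀ ⊓ (z₁ ⊔ z₂))) ≤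
      (x ⊓ (y ⊔ (z₀ ⊓ z₁) ⊔ (z₀ ⊓ z₂))) ⊔ (x ⊓ (y ⊔ ((z₀ ⊓ (z₁ ⊔ z₂)) ⊓ (y ⊔ x)))))
    (k₀ k₁ : L) (C : Finset L)
    (hk₀ : JoinIrred k₀) (hk₁ : JoinIrred k₁) (hnp : ¬ JoinPrime k₁)
    (hk₁C : k₁ ∉ C) (hmjc : MinJoinCover k₀ (insert k₁ C)) :
    k₁ ≤ C.sup id ⊔ k₀ := by
  rw [JoinPrime] at hnp
  push_neg at hnp
  obtain ⟨a, b, hab, hka, hkb⟩ := hnp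
  set s := C.sup id with hs_def
  have hcov : k₀ ≤ k₁ ⊔ s := by
    have := hmjc.2.2.1
    rwa [Finset.sup_insert] at this
  have h1 : k₁ ⊓ (a ⊔ b) = k₁ := inf_eq_left.2 hab
  have hs := hSym k₀ s k₁ a b
  rw [h1] at hs
  have h2 : k₀ ⊓ (s ⊔ k₁) = k₀ := inf_eq_left.2 (by rw [sup_comm]; exact hcov)
  rw [h2] at hs
  set u := k₀ ⊓ (s ⊔ k₁ ⊓ a ⊔ k₁ ⊓ b) with hu_def
  set v := k₀ ⊓ (s ⊔ k₁ ⊓ (s ⊔ k₀)) with hv_def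
  have heq : k₀ = u ⊔ v := le_antisymm hs (sup_le inf_le_left inf_le_left)
  rcases hk₀.2 u v heq with h | h
  · exfalso
    have hc : k₀ ≤ s ⊔ (k₁ ⊓ a ⊔ k₁ ⊓ b) := by
      calc k₀ = u := h
      _ ≤ s ⊔ k₁ ⊓ a ⊔ k₁ ⊓ b := inf_le_right
      _ = s ⊔ (k₁ ⊓ a ⊔ k₁ ⊓ b) := sup_assoc ..
    have hle := key_cover hk₁C hmjc _ (sup_le inf_le_left inf_le_left) hc
    have heq2 : k₁ = k₁ ⊓ a ⊔ k₁ ⊓ b :=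
      le_antisymm hle (sup_le inf_le_left inf_le_left)
    rcases hk₁.2 _ _ heq2 with h' | h'
    · exact hka ((le_of_eq h').trans inf_le_right)
    · exact hkb ((le_of_eq h').trans inf_le_right)
  · have hc : k₀ ≤ s ⊔ k₁ ⊓ (s ⊔ k₀) := (le_of_eq h).trans inf_le_right
    have hle := key_cover hk₁C hmjc _ inf_le_left hc
    exact hle.trans inf_le_right
end

section
/- Let L be a finite lattice and let j ⋘m C₀ ⊔ C₁ be a minimal join-cover of the join-irreducible j, partitioned into disjoint subsets C₀ and C₁. Suppose X is a finite set of join-irreducible elements with ⋁X ≤ ⋁C₀ and j ≤ ⋁X ∨ ⋁C₁. Then there exists a minimal join-cover of j of the form j ⋘m D₀ ⊔ C₁ where every element of D₀ is below some element of X. -/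
variable {L : Type*} [Lattice L] [OrderBot L] [DecidableEq L]

/-!
Refine the join-cover `X ∪ C₁` of `j` to a minimal join-cover `E`. Replacing `C₁` by the
elements of `E` lying below `C₁` gives a join-cover of `j` refining `C₀ ∪ C₁` (the part of `E`
below `X` is absorbed by `⋁C₀`), so minimality of `C₀ ∪ C₁` forces `C₁ ⊆ E`. Since `E` is an
antichain, its remaining elements lie below `X`.

Minimal join-covers exist because, among the antichain join-covers refining a given one, one
with the smallest down-set is minimal.
-/

section Lattice

variable {L : Type*} [Lattice L]

namespace Refines

theorem refl (X : Finset L) : Refines X X := fun x hx => ⟨x, hx, le_rfl⟩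

theorem of_subset {X Y : Finset L} (h : X ⊆ Y) : Refines X Y := fun x hx => ⟨x, h hx, le_rfl⟩

theorem trans {X Y Z : Finset L} (hXY : Refines X Y) (hYZ : Refines Y Z) : Refines X Z := by
  intro x hx
  obtain ⟨y, hy, hxy⟩ := hXY x hx
  obtain ⟨z, hz, hyz⟩ := hYZ y hy
  exact ⟨z, hz, hxy.trans hyz⟩

theorem sup_le [OrderBot L] {X Y : Finset L} (h : Refines X Y) : X.sup id ≤ Y.sup id :=
  Finset.sup_le fun _ hx =>
    let ⟨_, hy, hxy⟩ := h _ hx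
    hxy.trans (Finset.le_sup (f := id) hy)

theorem lowerClosure_subset {X Y : Finset L} (h : Refines X Y) :
    (lowerClosure (X : Set L) : Set L) ⊆ lowerClosure (Y : Set L) := by
  rintro z ⟨x, hx, hzx⟩
  obtain ⟨y, hy, hxy⟩ := h x hx
  exact ⟨y, hy, hzx.trans hxy⟩

theorem of_subset_lowerClosure {X Y : Finset L}
    (h : (X : Set L) ⊆ lowerClosure (Y : Set L)) : Refines X Y :=
  fun _ hx => mem_lowerClosure.1 (h hx)

theorem subset_of_isAntichain {X Y : Finset L} (hX : IsAntichain (· ≤ ·) (X : Set L))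
    (hXY : Refines X Y) (hYX : Refines Y X) : X ⊆ Y := by
  intro x hx
  obtain ⟨y, hy, hxy⟩ := hXY x hx
  obtain ⟨x', hx', hyx'⟩ := hYX y hy
  have hxx' : x = x' := hX.eq hx hx' (hxy.trans hyx')
  rwa [le_antisymm hxy (hxx' ▸ hyx')]

theorem sdiff_of_isAntichain [DecidableEq L] {E X C : Finset L}
    (hE : IsAntichain (· ≤ ·) (E : Set L)) (hCE : C ⊆ E) (hEXC : Refines E (X ∪ C)) :
    Refines (E \ C) X := by
  intro e he
  obtain ⟨heE, heC⟩ := Finset.mem_sdiff.1 he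
  obtain ⟨y, hy, hey⟩ := hEXC e heE
  rcases Finset.mem_union.1 hy with hyX | hyC
  · exact ⟨y, hyX, hey⟩
  · exact absurd (hE.eq heE (hCE hyC) hey ▸ hyC) heC

end Refines

theorem exists_isAntichain_subset_refines (D : Finset L) :
    ∃ M ⊆ D, IsAntichain (· ≤ ·) (M : Set L) ∧ Refines D M := by
  classical
  refine ⟨D.filter (Maximal (· ∈ D)), Finset.filter_subset _ _, ?_, fun d hd => ?_⟩
  · exact (setOfPred_maximal_antichain (· ∈ D)).subset fun x hx => (Finset.mem_filter.1 hx).2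
  · obtain ⟨m, hdm, hm⟩ := D.exists_le_maximal hd
    exact ⟨m, Finset.mem_filter.2 ⟨hm.prop, hm⟩, hdm⟩

theorem exists_minJoinCover_refines [OrderBot L] [Fintype L] {j : L} {Y : Finset L}
    (hY : ∀ y ∈ Y, JoinIrred y) (hjY : j ≤ Y.sup id) :
    ∃ E : Finset L, MinJoinCover j E ∧ Refines E Y := by
  classical
  let S := (Finset.univ : Finset (Finset L)).filter fun A : Finset L =>
    (∀ a ∈ A, JoinIrred a) ∧ IsAntichain (· ≤ ·) (A : Set L) ∧ j ≤ A.sup id ∧ Refines A Y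
  have antichain_mem : ∀ D : Finset L, (∀ d ∈ D, JoinIrred d) → j ≤ D.sup id →
      Refines D Y → ∃ M ⊆ D, M ∈ S ∧ Refines D M := by
    intro D hD hjD hDY
    obtain ⟨M, hMD, hM, hDM⟩ := exists_isAntichain_subset_refines D
    refine ⟨M, hMD, Finset.mem_filter.2 ⟨Finset.mem_univ _, fun m hm => hD m (hMD hm), hM,
      hjD.trans hDM.sup_le, (Refines.of_subset hMD).trans hDY⟩, hDM⟩
  obtain ⟨M₀, -, hM₀, -⟩ := antichain_mem Y hY hjY (Refines.refl Y)
  obtain ⟨E, hES, hEmin⟩ :=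
    S.exists_min_image (fun A => (lowerClosure (A : Set L) : Set L).ncard) ⟨M₀, hM₀⟩
  obtain ⟨-, hEji, hEac, hjE, hEY⟩ := Finset.mem_filter.1 hES
  refine ⟨E, ⟨hEji, hEac, hjE, fun D hD hjD hDE => ?_⟩, hEY⟩
  obtain ⟨M, hMD, hMS, -⟩ := antichain_mem D hD hjD (hDE.trans hEY)
  have hME : Refines M E := (Refines.of_subset hMD).trans hDE
  have hclosure : (lowerClosure (M : Set L) : Set L) = lowerClosure (E : Set L) :=
    Set.eq_of_subset_of_ncard_le hME.lowerClosure_subset (hEmin M hMS)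
  have hEM : Refines E M :=
    Refines.of_subset_lowerClosure (hclosure ▸ subset_lowerClosure)
  exact (hEM.subset_of_isAntichain hEac hME).trans hMD

end Lattice

theorem MinJoinCover.subset_of_refines_union {j : L} {C₀ C₁ X E : Finset L}
    (hC : MinJoinCover j (C₀ ∪ C₁)) (hdisj : Disjoint C₀ C₁) (hXC₀ : X.sup id ≤ C₀.sup id)
    (hE : ∀ e ∈ E, JoinIrred e) (hjE : j ≤ E.sup id) (hEXC : Refines E (X ∪ C₁)) :
    C₁ ⊆ E := by
  classical
  obtain ⟨hCji, -, -, hCmin⟩ := hC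
  let F := E.filter fun e => ∃ c ∈ C₁, e ≤ c
  have hFji : ∀ d ∈ C₀ ∪ F, JoinIrred d := by
    intro d hd
    rcases Finset.mem_union.1 hd with hd | hd
    · exact hCji d (Finset.mem_union_left _ hd)
    · exact hE d (Finset.filter_subset _ _ hd)
  have hjF : j ≤ (C₀ ∪ F).sup id := by
    refine hjE.trans (Finset.sup_le fun e he => ?_)
    rw [Finset.sup_union]
    obtain ⟨y, hy, hey⟩ := hEXC e he
    rcases Finset.mem_union.1 hy with hyX | hyC
    · exact le_sup_of_le_left ((hey.trans (Finset.le_sup (f := id) hyX)).trans hXC₀)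
    · exact le_sup_of_le_right (Finset.le_sup (f := id) (Finset.mem_filter.2 ⟨he, y, hyC, hey⟩))
  have hFC : Refines (C₀ ∪ F) (C₀ ∪ C₁) := by
    intro d hd
    rcases Finset.mem_union.1 hd with hd | hd
    · exact ⟨d, Finset.mem_union_left _ hd, le_rfl⟩
    · obtain ⟨c, hc, hdc⟩ := (Finset.mem_filter.1 hd).2
      exact ⟨c, Finset.mem_union_right _ hc, hdc⟩
  intro c hc
  rcases Finset.mem_union.1 (hCmin _ hFji hjF hFC (Finset.mem_union_right _ hc)) with h | h
  · exact absurd hc (Finset.disjoint_left.1 hdisj h)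
  · exact Finset.filter_subset _ _ h

theorem stmt_14_general [Fintype L]
    (j : L) (C₀ C₁ : Finset L) (hdisj : Disjoint C₀ C₁)
    (hmjc : MinJoinCover j (C₀ ∪ C₁))
    (X : Finset L) (hX : ∀ x ∈ X, JoinIrred x)
    (hXC₀ : X.sup id ≤ C₀.sup id) (hjX : j ≤ X.sup id ⊔ C₁.sup id) :
    ∃ D₀ : Finset L, Disjoint D₀ C₁ ∧ MinJoinCover j (D₀ ∪ C₁) ∧ Refines D₀ X := by
  have hXC₁ : ∀ y ∈ X ∪ C₁, JoinIrred y := by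
    intro y hy
    rcases Finset.mem_union.1 hy with hy | hy
    · exact hX y hy
    · exact hmjc.1 y (Finset.mem_union_right _ hy)
  obtain ⟨E, hE, hEXC⟩ :=
    exists_minJoinCover_refines hXC₁ (hjX.trans_eq Finset.sup_union.symm)
  have hC₁E : C₁ ⊆ E := hmjc.subset_of_refines_union hdisj hXC₀ hE.1 hE.2.2.1 hEXC
  refine ⟨E \ C₁, Finset.sdiff_disjoint, ?_, Refines.sdiff_of_isAntichain hE.2.1 hC₁E hEXC⟩
  rwa [Finset.sdiff_union_of_subset hC₁E]

theorem stmt_14 [Fintype L]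
    (j : L) (hj : JoinIrred j) (C₀ C₁ : Finset L) (hdisj : Disjoint C₀ C₁)
    (hmjc : MinJoinCover j (C₀ ∪ C₁))
    (X : Finset L) (hX : ∀ x ∈ X, JoinIrred x)
    (hXC₀ : X.sup id ≤ C₀.sup id) (hjX : j ≤ X.sup id ⊔ C₁.sup id) :
    ∃ D₀ : Finset L, Disjoint D₀ C₁ ∧ MinJoinCover j (D₀ ∪ C₁) ∧ Refines D₀ X :=
  stmt_14_general j C₀ C₁ hdisj hmjc X hX hXC₀ hjX
end

section
/- Let D and A be the two-element set {0,1}, and let R(D,A) be the relational lattice whose elements are pairs (H, T) with H ⊆ A and T ⊆ D^H (functions from H to D), ordered by (H₁, T₁) ≤ (H₂, T₂) iff H₂ ⊆ H₁ and { f restricted to H₂ : f ∈ T₁ } ⊆ T₂. Then R(D,A) is a lattice and it satisfies the inclusion (VarRL1): x ∧ ((y ∧ z) ∨ (y ∧ x) ∨ (z ∧ x)) ≤ (x ∧ y) ∨ (x ∧ z) for all x, y, z. -/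
/-- Elements of the relational lattice R(D,A) with D = A = {0,1}:
pairs (H, T) with H ⊆ A and T a set of functions H → D. -/
structure RelLat where
  H : Set (Fin 2)
  T : Set (↥H → Fin 2)

/-- Restriction of a function along an inclusion of header sets. -/
def RelLat.restrict {H₁ H₂ : Set (Fin 2)} (h : H₂ ⊆ H₁) (f : ↥H₁ → Fin 2) :
    ↥H₂ → Fin 2 :=
  fun a => f ⟨a.1, h a.2⟩

/-- The relational-lattice order: (H₁,T₁) ≤ (H₂,T₂) iff H₂ ⊆ H₁ and every
restriction to H₂ of a member of T₁ belongs to T₂. -/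
def RelLat.rle (x y : RelLat) : Prop :=
  ∃ h : y.H ⊆ x.H, ∀ f ∈ x.T, RelLat.restrict h f ∈ y.T

def lle (inst : Lattice RelLat) : RelLat → RelLat → Prop :=
  letI := inst; (· ≤ ·)

def lmeet (inst : Lattice RelLat) : RelLat → RelLat → RelLat :=
  letI := inst; (· ⊓ ·)

def ljoin (inst : Lattice RelLat) : RelLat → RelLat → RelLat :=
  letI := inst; (· ⊔ ·)

def rmeet (x y : RelLat) : RelLat :=
  ⟨x.H ∪ y.H, {f | RelLat.restrict Set.subset_union_left f ∈ x.T ∧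
                   RelLat.restrict Set.subset_union_right f ∈ y.T}⟩

def rjoin (x y : RelLat) : RelLat :=
  ⟨x.H ∩ y.H, (RelLat.restrict Set.inter_subset_left '' x.T) ∪
              (RelLat.restrict Set.inter_subset_right '' y.T)⟩

def latt : Lattice RelLat where
  le := RelLat.rle
  le_refl x := ⟨le_refl _, fun f hf => hf⟩
  le_trans x y z := by
    rintro ⟨h1, p1⟩ ⟨h2, p2⟩
    exact ⟨fun a ha => h1 (h2 ha), fun f hf => p2 _ (p1 f hf)⟩
  le_antisymm := by
    rintro ⟨Hx, Tx⟩ ⟨Hy, Ty⟩ ⟨h1, p1⟩ ⟨h2, p2⟩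
    obtain rfl : Hx = Hy := h2.antisymm h1
    congr 1
    ext f
    exact ⟨fun hf => p1 f hf, fun hf => p2 f hf⟩
  sup := rjoin
  le_sup_left x y := ⟨Set.inter_subset_left, fun f hf => Or.inl ⟨f, hf, rfl⟩⟩
  le_sup_right x y := ⟨Set.inter_subset_right, fun f hf => Or.inr ⟨f, hf, rfl⟩⟩
  sup_le x y z := by
    rintro ⟨h1, p1⟩ ⟨h2, p2⟩
    refine ⟨fun a ha => ⟨h1 ha, h2 ha⟩, ?_⟩
    rintro f (⟨g, hg, rfl⟩ | ⟨g, hg, rfl⟩)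
    · exact p1 g hg
    · exact p2 g hg
  inf := rmeet
  inf_le_left x y := ⟨Set.subset_union_left, fun f hf => hf.1⟩
  inf_le_right x y := ⟨Set.subset_union_right, fun f hf => hf.2⟩
  le_inf x y z := by
    rintro ⟨h1, p1⟩ ⟨h2, p2⟩
    exact ⟨Set.union_subset h1 h2, fun f hf => ⟨p1 f hf, p2 f hf⟩⟩


open Classical in
lemma key (x y : RelLat) (J R K : Set (Fin 2)) (f : ↥(x.H ∪ J) → Fin 2) (g : ↥K → Fin 2)
    (hYK : y.H ⊆ K) (hJK : J ⊆ K)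
    (hfx : RelLat.restrict Set.subset_union_left f ∈ x.T)
    (hgy : RelLat.restrict hYK g ∈ y.T)
    (hfg : RelLat.restrict Set.subset_union_right f = RelLat.restrict hJK g)
    (hXY : x.H ∩ y.H ⊆ J)
    (hR1 : R ⊆ x.H ∪ J) (hR2 : R ⊆ x.H ∪ y.H) (hR3 : ∀ a ∈ R, a ∉ x.H → a ∈ J) :
    ∃ h ∈ (rmeet x y).T, RelLat.restrict hR2 h = RelLat.restrict hR1 f := by
  refine ⟨fun a => if ha : a.1 ∈ x.H then f ⟨a.1, Or.inl ha⟩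
      else g ⟨a.1, hYK (a.2.resolve_left ha)⟩, ⟨?_, ?_⟩, ?_⟩
  · have e : RelLat.restrict (Set.subset_union_left : x.H ⊆ x.H ∪ y.H)
        (fun a : ↥(x.H ∪ y.H) => if ha : a.1 ∈ x.H then f ⟨a.1, Or.inl ha⟩
          else g ⟨a.1, hYK (a.2.resolve_left ha)⟩)
        = RelLat.restrict (Set.subset_union_left : x.H ⊆ x.H ∪ J) f :=
      funext fun a => dif_pos a.2
    exact Set.mem_of_eq_of_mem e hfx
  · have e : RelLat.restrict (Set.subset_union_right : y.H ⊆ x.H ∪ y.H)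
        (fun a : ↥(x.H ∪ y.H) => if ha : a.1 ∈ x.H then f ⟨a.1, Or.inl ha⟩
          else g ⟨a.1, hYK (a.2.resolve_left ha)⟩)
        = RelLat.restrict hYK g := by
      funext a
      by_cases hax : a.1 ∈ x.H
      · have haJ : a.1 ∈ J := hXY ⟨hax, a.2⟩
        have h2 := congrFun hfg ⟨a.1, haJ⟩
        simpa [RelLat.restrict, dif_pos hax] using h2
      · exact dif_neg hax
    exact Set.mem_of_eq_of_mem e hgy
  · funext a
    by_cases hax : a.1 ∈ x.H
    · exact dif_pos hax
    · have haJ := hR3 a.1 a.2 hax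
      have h2 := congrFun hfg ⟨a.1, haJ⟩
      simpa [RelLat.restrict, dif_neg hax] using h2.symm

theorem stmt_15 :
    ∃ inst : Lattice RelLat,
      (∀ x y : RelLat, lle inst x y ↔ RelLat.rle x y) ∧
      (∀ x y z : RelLat,
        lle inst
          (lmeet inst x (ljoin inst (ljoin inst (lmeet inst y z) (lmeet inst y x)) (lmeet inst z x)))
          (ljoin inst (lmeet inst x y) (lmeet inst x z))) := by
  refine ⟨latt, fun x y => Iff.rfl, fun x y z => ?_⟩
  show RelLat.rle (rmeet x (rjoin (rjoin (rmeet y z) (rmeet y x)) (rmeet z x)))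
    (rjoin (rmeet x y) (rmeet x z))
  set J : Set (Fin 2) := ((y.H ∪ z.H) ∩ (y.H ∪ x.H)) ∩ (z.H ∪ x.H) with hJdef
  have hJyz : J ⊆ y.H ∪ z.H := fun a ha => ha.1.1
  have hJyx : J ⊆ y.H ∪ x.H := fun a ha => ha.1.2
  have hJzx : J ⊆ z.H ∪ x.H := fun a ha => ha.2
  have hXYJ : x.H ∩ y.H ⊆ J := fun a ha => ⟨⟨Or.inl ha.2, Or.inl ha.2⟩, Or.inr ha.1⟩
  have hXZJ : x.H ∩ z.H ⊆ J := fun a ha => ⟨⟨Or.inr ha.2, Or.inr ha.1⟩, Or.inl ha.2⟩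
  have hR2y : (x.H ∪ y.H) ∩ (x.H ∪ z.H) ⊆ x.H ∪ y.H := fun a ha => ha.1
  have hR2z : (x.H ∪ y.H) ∩ (x.H ∪ z.H) ⊆ x.H ∪ z.H := fun a ha => ha.2
  have hR3 : ∀ a ∈ (x.H ∪ y.H) ∩ (x.H ∪ z.H), a ∉ x.H → a ∈ J := fun a ha hax => by
    have hy := ha.1.resolve_left hax
    have hz := ha.2.resolve_left hax
    exact ⟨⟨Or.inl hy, Or.inl hy⟩, Or.inl hz⟩
  have hsub : (x.H ∪ y.H) ∩ (x.H ∪ z.H) ⊆ x.H ∪ J := fun a ha => by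
    by_cases hax : a ∈ x.H
    · exact Or.inl hax
    · exact Or.inr (hR3 a ha hax)
  refine ⟨hsub, ?_⟩
  rintro f ⟨hfx, hfJ⟩
  rcases hfJ with (⟨s, hs, hseq⟩ | ⟨g, hg, hgeq⟩)
  · rcases hs with (⟨g, hg, rfl⟩ | ⟨g, hg, rfl⟩)
    · obtain ⟨h, hh, he⟩ := key x y J ((x.H ∪ y.H) ∩ (x.H ∪ z.H)) (y.H ∪ z.H) f g
        Set.subset_union_left hJyz hfx hg.1 hseq.symm hXYJ hsub hR2y hR3
      exact Or.inl ⟨h, hh, he⟩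
    · obtain ⟨h, hh, he⟩ := key x y J ((x.H ∪ y.H) ∩ (x.H ∪ z.H)) (y.H ∪ x.H) f g
        Set.subset_union_left hJyx hfx hg.1 hseq.symm hXYJ hsub hR2y hR3
      exact Or.inl ⟨h, hh, he⟩
  · obtain ⟨h, hh, he⟩ := key x z J ((x.H ∪ y.H) ∩ (x.H ∪ z.H)) (z.H ∪ x.H) f g
      Set.subset_union_left hJzx hfx hg.1 hgeq.symm hXZJ hsub hR2z hR3
    exact Or.inr ⟨h, hh, he⟩
end

section
/- Let D = A = {0,1} and let R(D,A) be the relational lattice as defined. Then R(D,A) satisfies the inclusion (SymPC): x ∧ (y ∨ z) ≤ (x ∧ (y ∨ (z ∧ (x ∨ y)))) ∨ (x ∧ (z ∨ (y ∧ (x ∨ z)))) for all x, y, z. -/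
namespace RelLat

def rmeet (x y : RelLat) : RelLat where
  H := x.H ∪ y.H
  T := {f | restrict Set.subset_union_left f ∈ x.T ∧
            restrict Set.subset_union_right f ∈ y.T}

def rjoin (x y : RelLat) : RelLat where
  H := x.H ∩ y.H
  T := {g | (∃ f ∈ x.T, restrict Set.inter_subset_left f = g) ∨
            (∃ f ∈ y.T, restrict Set.inter_subset_right f = g)}

instance latt : Lattice RelLat where
  le := rle
  le_refl x := ⟨subset_rfl, fun _ hf => hf⟩
  le_trans := by
    rintro a b c ⟨h1, t1⟩ ⟨h2, t2⟩
    exact ⟨h2.trans h1, fun f hf => t2 _ (t1 f hf)⟩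
  le_antisymm := by
    rintro ⟨Ha, Ta⟩ ⟨Hb, Tb⟩ ⟨h1, t1⟩ ⟨h2, t2⟩
    obtain rfl : Ha = Hb := subset_antisymm h2 h1
    congr 1
    exact subset_antisymm (fun f hf => t1 f hf) (fun f hf => t2 f hf)
  sup := rjoin
  le_sup_left := fun a b => ⟨Set.inter_subset_left, fun f hf => Or.inl ⟨f, hf, rfl⟩⟩
  le_sup_right := fun a b => ⟨Set.inter_subset_right, fun f hf => Or.inr ⟨f, hf, rfl⟩⟩
  sup_le := by
    rintro a b c ⟨h1, t1⟩ ⟨h2, t2⟩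
    refine ⟨Set.subset_inter h1 h2, ?_⟩
    rintro g (⟨f, hf, rfl⟩ | ⟨f, hf, rfl⟩)
    · exact t1 f hf
    · exact t2 f hf
  inf := rmeet
  inf_le_left := fun a b => ⟨Set.subset_union_left, fun f hf => hf.1⟩
  inf_le_right := fun a b => ⟨Set.subset_union_right, fun f hf => hf.2⟩
  le_inf := by
    rintro a b c ⟨h1, t1⟩ ⟨h2, t2⟩
    exact ⟨Set.union_subset h1 h2, fun f hf => ⟨t1 f hf, t2 f hf⟩⟩

/-- Key lemma: if `f` (defined on a header `W`) restricts into `x.T`, and agrees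
on `y.H ∩ z.H` with some member `g` of `z.T`, then `f` restricts into the tuples
of `x ⊓ (y ⊔ (z ⊓ (x ⊔ y)))`. -/
theorem key (x y z : RelLat) {W : Set (Fin 2)}
    (hxW : x.H ⊆ W) (hyzW : y.H ∩ z.H ⊆ W)
    (f : ↥W → Fin 2)
    (hfx : restrict hxW f ∈ x.T)
    (g : ↥z.H → Fin 2) (hg : g ∈ z.T)
    (hgf : ∀ (a : Fin 2) (ha : a ∈ y.H ∩ z.H), g ⟨a, ha.2⟩ = f ⟨a, hyzW ha⟩)
    (hW : (rmeet x (rjoin y (rmeet z (rjoin x y)))).H ⊆ W) :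
    restrict hW f ∈ (rmeet x (rjoin y (rmeet z (rjoin x y)))).T := by
  classical
  have hxyW : x.H ∩ y.H ⊆ W := fun a ha => hxW ha.1
  set F : ↥((rmeet z (rjoin x y)).H) → Fin 2 :=
    fun a => if p : a.1 ∈ z.H then g ⟨a.1, p⟩
      else f ⟨a.1, hxyW (((Set.mem_union _ _ _).1 a.2).resolve_left p)⟩ with hFdef
  have hFz : ∀ (a : Fin 2) (ha : a ∈ z.H) (hm : a ∈ (rmeet z (rjoin x y)).H),
      F ⟨a, hm⟩ = g ⟨a, ha⟩ := by
    intro a ha hm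
    simp only [hFdef]
    rw [dif_pos ha]
  have hFf : ∀ (a : Fin 2) (hm : a ∈ (rmeet z (rjoin x y)).H) (hy : a ∈ y.H)
      (hw : a ∈ W), F ⟨a, hm⟩ = f ⟨a, hw⟩ := by
    intro a hm hy hw
    by_cases p : a ∈ z.H
    · calc F ⟨a, hm⟩ = g ⟨a, p⟩ := hFz a p hm
        _ = f ⟨a, hyzW ⟨hy, p⟩⟩ := hgf a ⟨hy, p⟩
        _ = f ⟨a, hw⟩ := rfl
    · simp only [hFdef]
      rw [dif_neg p]
  refine ⟨hfx, Or.inr ⟨F, ⟨?_, Or.inl ⟨restrict hxW f, hfx, ?_⟩⟩, ?_⟩⟩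
  · -- F restricted to z.H is g
    have : restrict (Set.subset_union_left : z.H ⊆ (rmeet z (rjoin x y)).H) F = g := by
      funext a
      exact hFz a.1 a.2 _
    rw [this]; exact hg
  · -- F restricted to x.H ∩ y.H agrees with f there
    funext a
    exact (hFf a.1 _ a.2.2 (hxyW a.2)).symm
  · -- F restricted to the join header agrees with f there
    funext a
    exact hFf a.1 a.2.2 a.2.1 (hW (Or.inr a.2))

end RelLat

theorem stmt_16 :
    ∃ inst : Lattice RelLat,
      (∀ x y : RelLat, lle inst x y ↔ RelLat.rle x y) ∧
      (∀ x y z : RelLat,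
        lle inst
          (lmeet inst x (ljoin inst y z))
          (ljoin inst
            (lmeet inst x (ljoin inst y (lmeet inst z (ljoin inst x y))))
            (lmeet inst x (ljoin inst z (lmeet inst y (ljoin inst x z)))))) := by
  refine ⟨RelLat.latt, fun x y => Iff.rfl, ?_⟩
  intro x y z
  show RelLat.rle (RelLat.rmeet x (RelLat.rjoin y z))
    (RelLat.rjoin
      (RelLat.rmeet x (RelLat.rjoin y (RelLat.rmeet z (RelLat.rjoin x y))))
      (RelLat.rmeet x (RelLat.rjoin z (RelLat.rmeet y (RelLat.rjoin x z)))))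
  have hsub : (RelLat.rjoin
      (RelLat.rmeet x (RelLat.rjoin y (RelLat.rmeet z (RelLat.rjoin x y))))
      (RelLat.rmeet x (RelLat.rjoin z (RelLat.rmeet y (RelLat.rjoin x z))))).H ⊆
      (RelLat.rmeet x (RelLat.rjoin y z)).H := by
    intro a ha
    simp only [RelLat.rmeet, RelLat.rjoin, Set.mem_union, Set.mem_inter_iff] at *
    tauto
  refine ⟨hsub, ?_⟩
  rintro f ⟨hfx, hfyz⟩
  have h1 : (RelLat.rmeet x (RelLat.rjoin y (RelLat.rmeet z (RelLat.rjoin x y)))).H ⊆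
      (RelLat.rmeet x (RelLat.rjoin y z)).H := by
    intro a ha
    simp only [RelLat.rmeet, RelLat.rjoin, Set.mem_union, Set.mem_inter_iff] at *
    tauto
  have h2 : (RelLat.rmeet x (RelLat.rjoin z (RelLat.rmeet y (RelLat.rjoin x z)))).H ⊆
      (RelLat.rmeet x (RelLat.rjoin y z)).H := by
    intro a ha
    simp only [RelLat.rmeet, RelLat.rjoin, Set.mem_union, Set.mem_inter_iff] at *
    tauto
  rcases hfyz with ⟨g, hg, hgeq⟩ | ⟨g, hg, hgeq⟩
  · -- g comes from y.T : use the second (u2) component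
    refine Or.inr ⟨RelLat.restrict h2 f, ?_, rfl⟩
    refine RelLat.key x z y (W := (RelLat.rmeet x (RelLat.rjoin y z)).H)
      Set.subset_union_left (fun a ha => Or.inr ⟨ha.2, ha.1⟩) f hfx g hg ?_ h2
    intro a ha
    exact congrFun hgeq ⟨a, ⟨ha.2, ha.1⟩⟩
  · -- g comes from z.T : use the first (u1) component
    refine Or.inl ⟨RelLat.restrict h1 f, ?_, rfl⟩
    refine RelLat.key x y z (W := (RelLat.rmeet x (RelLat.rjoin y z)).H)
      Set.subset_union_left Set.subset_union_right f hfx g hg ?_ h1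
    intro a ha
    exact congrFun hgeq ⟨a, ha⟩
end

section
/- Let L be a lattice satisfying the three inclusions (Unjp): x ∧ (y ∨ z) ≤ (x ∧ ((x ∧ y) ∨ z)) ∨ (x ∧ (y ∨ (x ∧ z))); (RMod): x ∧ ((x ∧ y) ∨ (z₀ ∧ (z₁ ∨ z₂))) ≤ (x ∧ ((x ∧ y) ∨ (z₀ ∧ z₁) ∨ (z₀ ∧ z₂))) ∨ (x ∧ z₀ ∧ (z₁ ∨ z₂)); and (VarRL1): x ∧ ((y ∧ z) ∨ (y ∧ x) ∨ (z ∧ x)) ≤ (x ∧ y) ∨ (x ∧ z), all universally quantified. Then the equality x ∧ ((y ∧ (z ∨ x)) ∨ (z ∧ (y ∨ x))) = (x ∧ y) ∨ (x ∧ z) holds for all x, y, z in L. -/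
theorem stmt_18 {L : Type*} [Lattice L]
    (hUnjp : ∀ x y z : L, x ⊓ (y ⊔ z) ≤ (x ⊓ ((x ⊓ y) ⊔ z)) ⊔ (x ⊓ (y ⊔ (x ⊓ z))))
    (hRMod : ∀ x y z₀ z₁ z₂ : L, x ⊓ ((x ⊓ y) ⊔ (z₀ ⊓ (z₁ ⊔ z₂))) ≤
      (x ⊓ ((x ⊓ y) ⊔ (z₀ ⊓ z₁) ⊔ (z₀ ⊓ z₂))) ⊔ (x ⊓ z₀ ⊓ (z₁ ⊔ z₂)))
    (hVarRL1 : ∀ x y z : L, x ⊓ ((y ⊓ z) ⊔ (y ⊓ x) ⊔ (z ⊓ x)) ≤ (x ⊓ y) ⊔ (x ⊓ z)) :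
    ∀ x y z : L, x ⊓ ((y ⊓ (z ⊔ x)) ⊔ (z ⊓ (y ⊔ x))) = (x ⊓ y) ⊔ (x ⊓ z) := by
  intro x y z
  apply le_antisymm
  · -- the hard direction
    have e1 : x ⊓ (y ⊓ (z ⊔ x)) = x ⊓ y :=
      le_antisymm (le_inf inf_le_left (inf_le_of_right_le inf_le_left))
        (le_inf inf_le_left (le_inf inf_le_right (inf_le_left.trans le_sup_right)))
    have e2 : x ⊓ (z ⊓ (y ⊔ x)) = x ⊓ z :=
      le_antisymm (le_inf inf_le_left (inf_le_of_right_le inf_le_left))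
        (le_inf inf_le_left (le_inf inf_le_right (inf_le_left.trans le_sup_right)))
    have h1 := hUnjp x (y ⊓ (z ⊔ x)) (z ⊓ (y ⊔ x))
    rw [e1, e2] at h1
    refine h1.trans (sup_le ?_ ?_)
    · -- x ⊓ ((x ⊓ y) ⊔ (z ⊓ (y ⊔ x))) ≤ (x ⊓ y) ⊔ (x ⊓ z)
      refine (hRMod x y z y x).trans (sup_le ?_ ?_)
      · have : (x ⊓ y) ⊔ (z ⊓ y) ⊔ (z ⊓ x) = (y ⊓ z) ⊔ (y ⊓ x) ⊔ (z ⊓ x) := by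
          rw [inf_comm x y, inf_comm z y, sup_comm (y ⊓ x) (y ⊓ z)]
        rw [this]
        exact hVarRL1 x y z
      · exact le_sup_of_le_right inf_le_left
    · -- x ⊓ ((y ⊓ (z ⊔ x)) ⊔ (x ⊓ z)) ≤ (x ⊓ y) ⊔ (x ⊓ z)
      rw [sup_comm (y ⊓ (z ⊔ x)) (x ⊓ z)]
      refine (hRMod x z y z x).trans (sup_le ?_ ?_)
      · have : (x ⊓ z) ⊔ (y ⊓ z) ⊔ (y ⊓ x) = (z ⊓ y) ⊔ (z ⊓ x) ⊔ (y ⊓ x) := by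
          rw [inf_comm x z, inf_comm y z, sup_comm (z ⊓ x) (z ⊓ y)]
        rw [this]
        exact (hVarRL1 x z y).trans (by rw [sup_comm])
      · exact le_sup_of_le_left inf_le_left
  · exact sup_le
      (le_inf inf_le_left (le_sup_of_le_left (le_inf inf_le_right (inf_le_left.trans le_sup_right))))
      (le_inf inf_le_left (le_sup_of_le_right (le_inf inf_le_right (inf_le_left.trans le_sup_right))))
end
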